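/- arXiv:0911.5106 — 2 statements merged into one kernel-verified Lean document; each statement's English description precedes it below -/
import Mathlib

section
/- Let g : (0,1] → ℝ satisfy g(p^n) = n·g(p) for all p ∈ (0,1] and all natural numbers n ≥ 1, and suppose g is monotone increasing. Fix p, q ∈ (0,1) with g(q) < 0. Then for every ε > 0 there exists n such that |g(p)/g(q) − log p / log q| < 2ε; consequently g(p)/g(q) = log p / log q. -/
open Set

theorem approximation_step (g : ℝ → ℝ)
    (hpow : ∀ p ∈ Ioc (0:ℝ) 1, ∀ n : ℕ, 1 ≤ n → g (p ^ n) = n * g p)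
    (hmono : ∀ p ∈ Ioc (0:ℝ) 1, ∀ q ∈ Ioc (0:ℝ) 1, q ≤ p → g q ≤ g p)
    (p q : ℝ) (hp : p ∈ Ioo (0:ℝ) 1) (hq : q ∈ Ioo (0:ℝ) 1)
    (hgq : g q < 0) :
    (∀ ε > (0:ℝ), ∃ n : ℕ,
      |g p / g q - Real.log p / Real.log q| < 2 * ε) ∧
    g p / g q = Real.log p / Real.log q := by
  obtain ⟨hp0, hp1⟩ := hp
  obtain ⟨hq0, hq1⟩ := hq
  have hpI : p ∈ Ioc (0:ℝ) 1 := ⟨hp0, hp1.le⟩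
  have hqI : q ∈ Ioc (0:ℝ) 1 := ⟨hq0, hq1.le⟩
  have hlp : Real.log p < 0 := Real.log_neg hp0 hp1
  have hlq : Real.log q < 0 := Real.log_neg hq0 hq1
  -- g 1 = 0
  have h1I : (1:ℝ) ∈ Ioc (0:ℝ) 1 := ⟨one_pos, le_refl 1⟩
  have hg1 : g 1 = 0 := by
    have := hpow 1 h1I 2 (by norm_num)
    simp at this
    linarith
  have hpowq : ∀ n : ℕ, g (q ^ n) = n * g q := by
    intro n
    rcases Nat.eq_zero_or_pos n with h | h
    · subst h; simp [hg1]
    · exact hpow q hqI n h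
  have hqmem : ∀ n : ℕ, q ^ n ∈ Ioc (0:ℝ) 1 :=
    fun n => ⟨pow_pos hq0 n, pow_le_one₀ hq0.le hq1.le⟩
  have hpmem : ∀ n : ℕ, p ^ n ∈ Ioc (0:ℝ) 1 :=
    fun n => ⟨pow_pos hp0 n, pow_le_one₀ hp0.le hp1.le⟩
  set a := g p / g q with ha
  set b := Real.log p / Real.log q with hb
  have key : ∀ n : ℕ, 1 ≤ n → |a - b| ≤ 1 / n := by
    intro n hn
    have hnpos : (0:ℝ) < n := by exact_mod_cast hn
    set x : ℝ := n * Real.log p / Real.log q with hx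
    have hxnn : 0 ≤ x := by
      rw [hx, div_nonneg_iff]
      exact Or.inr ⟨by nlinarith, hlq.le⟩
    set m : ℕ := ⌊x⌋₊ with hm
    have hfl : (m:ℝ) ≤ x := Nat.floor_le hxnn
    have hfu : x < m + 1 := Nat.lt_floor_add_one x
    have hxq : x * Real.log q = n * Real.log p :=
      div_mul_cancel₀ _ hlq.ne
    -- q^m ≥ p^n
    have h1 : p ^ n ≤ q ^ m := by
      have : Real.log (p ^ n) ≤ Real.log (q ^ m) := by
        rw [Real.log_pow, Real.log_pow]
        nlinarith [mul_le_mul_of_nonpos_right hfl hlq.le]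
      exact (Real.log_le_log_iff (pow_pos hp0 n) (pow_pos hq0 m)).mp this
    have h2 : q ^ (m + 1) ≤ p ^ n := by
      have : Real.log (q ^ (m + 1)) ≤ Real.log (p ^ n) := by
        rw [Real.log_pow, Real.log_pow]
        push_cast
        nlinarith [mul_le_mul_of_nonpos_right hfu.le hlq.le]
      exact (Real.log_le_log_iff (pow_pos hq0 _) (pow_pos hp0 n)).mp this
    have hg1' : (n:ℝ) * g p ≤ m * g q := by
      have := hmono _ (hqmem m) _ (hpmem n) h1
      rwa [hpow p hpI n hn, hpowq m] at this
    have hg2 : ((m:ℝ) + 1) * g q ≤ n * g p := by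
      have := hmono _ (hpmem n) _ (hqmem (m + 1)) h2
      rw [hpow p hpI n hn, hpowq (m + 1)] at this
      push_cast at this
      linarith
    -- divide by g q < 0
    have hna1 : (m:ℝ) ≤ n * a := by
      rw [ha, ← mul_div_assoc, le_div_iff_of_neg hgq]
      linarith
    have hna2 : (n:ℝ) * a ≤ m + 1 := by
      rw [ha, ← mul_div_assoc, div_le_iff_of_neg hgq]
      linarith
    have hnb1 : (m:ℝ) ≤ n * b := by
      rw [hb, ← mul_div_assoc, le_div_iff_of_neg hlq]
      nlinarith [mul_le_mul_of_nonpos_right hfl hlq.le]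
    have hnb2 : (n:ℝ) * b ≤ m + 1 := by
      rw [hb, ← mul_div_assoc, div_le_iff_of_neg hlq]
      nlinarith [mul_le_mul_of_nonpos_right hfu.le hlq.le]
    rw [abs_sub_le_iff]
    constructor <;> rw [le_div_iff₀ hnpos] <;> nlinarith
  have heq : a = b := by
    by_contra h
    have habs : 0 < |a - b| := abs_pos.mpr (sub_ne_zero.mpr h)
    obtain ⟨n, hn⟩ := exists_nat_one_div_lt habs
    have := key (n + 1) (Nat.le_add_left 1 n)
    push_cast at this hn
    linarith
  refine ⟨fun ε hε => ⟨0, ?_⟩, heq⟩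
  rw [heq]
  simp
  linarith
end

section
/- Let (𝔓, 𝔔) be an interaction system with generative distribution G, and suppose all relevant conditional probabilities are positive. Then the agent's expected utility satisfies E_G[(1/t) log 𝔓(ao_{≤t})] = GU_𝔓 + GU_𝔔 + PU_𝔓, where PU_𝔓 = −(1/t) Σ_{τ=1}^{t} D[𝔔(o_τ|ao_{<τ}a_τ) ‖ 𝔓(o_τ|ao_{<τ}a_τ)] (per-step KL divergences weighted by G), and GU_𝔓, GU_𝔔 are the negative per-step entropy rates of action and observation generation respectively. In particular PU_𝔓 ≤ 0, so E_G[(1/t) log 𝔓(ao_{≤t})] ≤ E_G[(1/t) log G(ao_{≤t})]. -/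
/-!
By the chain rule, `log 𝔓(ao_{≤t})` is the sum over `τ` of `log 𝔓(a_τ|ao_{<τ})` and
`log 𝔓(o_τ|ao_{<τ}a_τ)`. Since the conditionals of `G` are normalized, the `G`-expectation of
the `τ`-th summand only involves the marginal of `G` on `ao_{≤τ}`. Writing
`log 𝔓(o|…) = log 𝔔(o|…) - log (𝔔(o|…) / 𝔓(o|…))` splits the agent's expected utility into
`GU_𝔓 + GU_𝔔 + PU_𝔓`, and `PU_𝔓 ≤ 0` is Gibbs' inequality for each history and action.
The same decomposition applied to `G` itself gives `E_G[(1/t) log G] = GU_𝔓 + GU_𝔔`.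
-/

open Finset

theorem Fin.take_snoc {X : Type*} {n m : ℕ} (h : m ≤ n) (w : Fin n → X) (x : X) :
    Fin.take m (h.trans n.le_succ) (Fin.snoc w x : Fin (n + 1) → X) = Fin.take m h w := by
  rw [← Fin.take_take h n.le_succ, Fin.take_eq_init, Fin.init_snoc]

theorem Finset.sum_mul_log_div_nonneg {ι : Type*} (s : Finset ι) {p q : ι → ℝ}
    (hp : ∀ i ∈ s, 0 ≤ p i) (hq : ∀ i ∈ s, 0 < q i) (hpq : ∑ i ∈ s, q i ≤ ∑ i ∈ s, p i) :
    0 ≤ ∑ i ∈ s, p i * Real.log (p i / q i) := by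
  have hterm : ∀ i ∈ s, p i * Real.log (p i / q i) =
      q i * InformationTheory.klFun (p i / q i) + (p i - q i) := fun i hi => by
    have := (hq i hi).ne'
    rw [InformationTheory.klFun_apply]
    field_simp
    ring
  rw [sum_congr rfl hterm, sum_add_distrib, sum_sub_distrib]
  have hkl : 0 ≤ ∑ i ∈ s, q i * InformationTheory.klFun (p i / q i) :=
    sum_nonneg fun i hi => mul_nonneg (hq i hi).le
      (InformationTheory.klFun_nonneg (div_nonneg (hp i hi) (hq i hi).le))
  linarith

namespace InteractionSystem

variable {X : Type*}

def chainProb (step : List X → X → ℝ) (n : ℕ) (v : Fin n → X) : ℝ :=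
  ∏ i : Fin n, step (List.ofFn (Fin.take i i.isLt.le v)) (v i)

/-- Expectation of `f(ao_{<τ}, ao_τ)` under `chainProb step` (steps are `0`-indexed); with
`step` the conditionals of `G`, the sums over `v` in `GU_𝔓`, `GU_𝔔` and `PU_𝔓` are of this
form. -/
def stepExpectation [Fintype X] (step : List X → X → ℝ) (τ : ℕ) (f : List X → X → ℝ) : ℝ :=
  ∑ w : Fin (τ + 1) → X, chainProb step (τ + 1) w * f (List.ofFn (Fin.init w)) (w (Fin.last τ))

variable {step : List X → X → ℝ}

theorem chainProb_nonneg (hstep : ∀ l x, 0 ≤ step l x) (n : ℕ) (v : Fin n → X) :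
    0 ≤ chainProb step n v :=
  prod_nonneg fun _ _ => hstep _ _

theorem log_chainProb (hstep : ∀ l x, 0 < step l x) (n : ℕ) (v : Fin n → X) :
    Real.log (chainProb step n v) =
      ∑ i : Fin n, Real.log (step (List.ofFn (Fin.take i i.isLt.le v)) (v i)) :=
  Real.log_prod fun _ _ => (hstep _ _).ne'

theorem chainProb_snoc {n : ℕ} (w : Fin n → X) (x : X) :
    chainProb step (n + 1) (Fin.snoc w x) = chainProb step n w * step (List.ofFn w) x := by
  rw [chainProb, Fin.prod_univ_castSucc, Fin.snoc_last]
  congr 1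
  · refine prod_congr rfl fun i _ => ?_
    rw [Fin.snoc_castSucc]
    exact congrArg₂ step (congrArg List.ofFn (Fin.take_snoc i.isLt.le w x)) rfl
  · exact congrArg₂ step (congrArg List.ofFn (Fin.take_snoc le_rfl w x)) rfl

variable [Fintype X]

theorem sum_chainProb_succ_mul {n : ℕ} (F : (Fin (n + 1) → X) → ℝ) :
    ∑ v, chainProb step (n + 1) v * F v =
      ∑ w : Fin n → X, chainProb step n w * ∑ x, step (List.ofFn w) x * F (Fin.snoc w x) := by
  rw [← (Fin.snocEquiv fun _ => X).sum_comp, Fintype.sum_prod_type, sum_comm]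
  change ∑ w, ∑ x, chainProb step (n + 1) (Fin.snoc w x) * F (Fin.snoc w x) = _
  simp only [chainProb_snoc, mul_sum, mul_assoc]

theorem sum_chainProb_mul_take (hnorm : ∀ l, ∑ x, step l x = 1) {s n : ℕ} (h : s ≤ n)
    (f : (Fin s → X) → ℝ) :
    ∑ v : Fin n → X, chainProb step n v * f (Fin.take s h v) = ∑ w, chainProb step s w * f w := by
  induction n, h using Nat.le_induction with
  | base => simp only [Fin.take_eq_self]
  | succ n hsn ih =>
    rw [sum_chainProb_succ_mul, ← ih]
    refine sum_congr rfl fun w _ => ?_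
    simp only [Fin.take_snoc hsn, ← sum_mul, hnorm, one_mul]

theorem sum_chainProb_mul_sum_steps (hnorm : ∀ l, ∑ x, step l x = 1) (t : ℕ)
    (f : List X → X → ℝ) :
    ∑ v : Fin t → X,
        chainProb step t v * ∑ i : Fin t, f (List.ofFn (Fin.take i i.isLt.le v)) (v i) =
      ∑ τ : Fin t, stepExpectation step τ f := by
  simp only [mul_sum]
  rw [sum_comm]
  refine sum_congr rfl fun τ _ => ?_
  exact sum_chainProb_mul_take hnorm τ.isLt
    (fun w : Fin (τ + 1) → X => f (List.ofFn (Fin.init w)) (w (Fin.last τ)))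

theorem sum_chainProb_mul_log_chainProb {g u : List X → X → ℝ} (hg : ∀ l, ∑ x, g l x = 1)
    (hu : ∀ l x, 0 < u l x) (t : ℕ) :
    ∑ v : Fin t → X, chainProb g t v * Real.log (chainProb u t v) =
      ∑ τ : Fin t, stepExpectation g τ fun l x => Real.log (u l x) := by
  simp only [log_chainProb hu]
  exact sum_chainProb_mul_sum_steps hg t fun l x => Real.log (u l x)

theorem stepExpectation_add (τ : ℕ) (f₁ f₂ : List X → X → ℝ) :
    stepExpectation step τ (f₁ + f₂) = stepExpectation step τ f₁ + stepExpectation step τ f₂ := by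
  simp only [stepExpectation, Pi.add_apply, mul_add, sum_add_distrib]

theorem stepExpectation_sub (τ : ℕ) (f₁ f₂ : List X → X → ℝ) :
    stepExpectation step τ (f₁ - f₂) = stepExpectation step τ f₁ - stepExpectation step τ f₂ := by
  simp only [stepExpectation, Pi.sub_apply, mul_sub, sum_sub_distrib]

theorem stepExpectation_eq_sum_chainProb_mul (τ : ℕ) (f : List X → X → ℝ) :
    stepExpectation step τ f =
      ∑ w : Fin τ → X, chainProb step τ w * ∑ x, step (List.ofFn w) x * f (List.ofFn w) x := by
  simp only [stepExpectation, sum_chainProb_succ_mul, Fin.init_snoc, Fin.snoc_last]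

theorem stepExpectation_nonneg (hstep : ∀ l x, 0 ≤ step l x) {f : List X → X → ℝ}
    (hf : ∀ l, 0 ≤ ∑ x, step l x * f l x) (τ : ℕ) : 0 ≤ stepExpectation step τ f := by
  rw [stepExpectation_eq_sum_chainProb_mul]
  exact sum_nonneg fun w _ => mul_nonneg (chainProb_nonneg hstep τ w) (hf _)

section Agent

variable {A O : Type*} [Fintype A] [Fintype O]

def jointStep (pA : List (A × O) → A → ℝ) (pO : List (A × O) → A → O → ℝ)
    (l : List (A × O)) (x : A × O) : ℝ :=
  pA l x.1 * pO l x.1 x.2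

variable {pA : List (A × O) → A → ℝ} {pE pO : List (A × O) → A → O → ℝ}

theorem sum_jointStep (hpA : ∀ l, ∑ a, pA l a = 1) (hpO : ∀ l a, ∑ o, pO l a o = 1)
    (l : List (A × O)) : ∑ x, jointStep pA pO l x = 1 := by
  simp only [jointStep, Fintype.sum_prod_type, ← mul_sum, hpO, mul_one, hpA]

theorem sum_jointStep_mul_log_div_nonneg (hpA : ∀ l a, 0 ≤ pA l a)
    (hpE : ∀ l a o, 0 < pE l a o) (hpO : ∀ l a o, 0 < pO l a o)
    (hpEnorm : ∀ l a, ∑ o, pE l a o = 1) (hpOnorm : ∀ l a, ∑ o, pO l a o = 1)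
    (l : List (A × O)) :
    0 ≤ ∑ x, jointStep pA pE l x * Real.log (pE l x.1 x.2 / pO l x.1 x.2) := by
  simp only [jointStep, Fintype.sum_prod_type, mul_assoc, ← mul_sum]
  exact sum_nonneg fun a _ => mul_nonneg (hpA l a) <| sum_mul_log_div_nonneg _
    (fun o _ => (hpE l a o).le) (fun o _ => hpO l a o) (by rw [hpEnorm, hpOnorm])

theorem sum_chainProb_mul_log_chainProb_jointStep {g : List (A × O) → A × O → ℝ}
    (hg : ∀ l, ∑ x, g l x = 1) (hpA : ∀ l a, 0 < pA l a) (hpO : ∀ l a o, 0 < pO l a o)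
    (t : ℕ) :
    ∑ v : Fin t → A × O, chainProb g t v * Real.log (chainProb (jointStep pA pO) t v) =
      ∑ τ : Fin t, (stepExpectation g τ (fun l x => Real.log (pA l x.1)) +
        stepExpectation g τ fun l x => Real.log (pO l x.1 x.2)) := by
  rw [sum_chainProb_mul_log_chainProb (u := jointStep pA pO) hg
    fun l x => mul_pos (hpA _ _) (hpO _ _ _)]
  refine sum_congr rfl fun τ _ => ?_
  rw [← stepExpectation_add]
  congr
  funext l x
  exact Real.log_mul (hpA _ _).ne' (hpO _ _ _).ne'

theorem stepExpectation_log_eq_sub (hpE : ∀ l a o, 0 < pE l a o) (hpO : ∀ l a o, 0 < pO l a o)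
    (g : List (A × O) → A × O → ℝ) (τ : ℕ) :
    stepExpectation g τ (fun l x => Real.log (pO l x.1 x.2)) =
      stepExpectation g τ (fun l x => Real.log (pE l x.1 x.2)) -
        stepExpectation g τ fun l x => Real.log (pE l x.1 x.2 / pO l x.1 x.2) := by
  rw [← stepExpectation_sub]
  congr
  funext l x
  rw [Pi.sub_apply, Pi.sub_apply, Real.log_div (hpE _ _ _).ne' (hpO _ _ _).ne', sub_sub_cancel]

theorem stepExpectation_log_div_nonneg (hpA : ∀ l a, 0 ≤ pA l a)
    (hpE : ∀ l a o, 0 < pE l a o) (hpO : ∀ l a o, 0 < pO l a o)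
    (hpEnorm : ∀ l a, ∑ o, pE l a o = 1) (hpOnorm : ∀ l a, ∑ o, pO l a o = 1) (τ : ℕ) :
    0 ≤ stepExpectation (jointStep pA pE) τ fun l x => Real.log (pE l x.1 x.2 / pO l x.1 x.2) :=
  stepExpectation_nonneg (step := jointStep pA pE)
    (fun _ _ => mul_nonneg (hpA _ _) (hpE _ _ _).le)
    (sum_jointStep_mul_log_div_nonneg hpA hpE hpO hpEnorm hpOnorm) τ

end Agent

end InteractionSystem

open InteractionSystem

theorem expected_utility_agent_general {A O : Type*} [Fintype A] [Fintype O]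
    (pA : List (A × O) → A → ℝ)        -- 𝔓(a_τ | ao_{<τ})
    (pE : List (A × O) → A → O → ℝ)    -- 𝔔(o_τ | ao_{<τ} a_τ)
    (pO : List (A × O) → A → O → ℝ)    -- 𝔓(o_τ | ao_{<τ} a_τ)
    (hpA : ∀ l a, 0 < pA l a) (hpE : ∀ l a o, 0 < pE l a o) (hpO : ∀ l a o, 0 < pO l a o)
    (hpAnorm : ∀ l, ∑ a : A, pA l a = 1)
    (hpEnorm : ∀ l a, ∑ o : O, pE l a o = 1)
    (hpOnorm : ∀ l a, ∑ o : O, pO l a o = 1)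
    (Gp : ∀ n : ℕ, (Fin n → A × O) → ℝ)  -- generative prefix probabilities
    (hGp : ∀ n (v : Fin n → A × O), Gp n v =
      ∏ i : Fin n,
        (pA (List.ofFn fun j : Fin i => v (Fin.castLE i.isLt.le j)) (v i).1 *
          pE (List.ofFn fun j : Fin i => v (Fin.castLE i.isLt.le j)) (v i).1 (v i).2))
    (Pp : ∀ n : ℕ, (Fin n → A × O) → ℝ)  -- agent prefix probabilities
    (hPp : ∀ n (v : Fin n → A × O), Pp n v =
      ∏ i : Fin n,
        (pA (List.ofFn fun j : Fin i => v (Fin.castLE i.isLt.le j)) (v i).1 *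
          pO (List.ofFn fun j : Fin i => v (Fin.castLE i.isLt.le j)) (v i).1 (v i).2))
    (t : ℕ)
    (GUA GUE PUA : ℝ)
    (hGUA : GUA = -(1 / (t:ℝ)) * ∑ τ : Fin t, -∑ v : Fin (τ + 1) → A × O,
      Gp (τ + 1) v *
        Real.log (pA (List.ofFn fun j : Fin τ => v j.castSucc) (v (Fin.last τ)).1))
    (hGUE : GUE = -(1 / (t:ℝ)) * ∑ τ : Fin t, -∑ v : Fin (τ + 1) → A × O,
      Gp (τ + 1) v *
        Real.log (pE (List.ofFn fun j : Fin τ => v j.castSucc) (v (Fin.last τ)).1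
          (v (Fin.last τ)).2))
    (hPUA : PUA = -(1 / (t:ℝ)) * ∑ τ : Fin t, ∑ v : Fin (τ + 1) → A × O,
      Gp (τ + 1) v *
        Real.log (pE (List.ofFn fun j : Fin τ => v j.castSucc) (v (Fin.last τ)).1
            (v (Fin.last τ)).2 /
          pO (List.ofFn fun j : Fin τ => v j.castSucc) (v (Fin.last τ)).1
            (v (Fin.last τ)).2)) :
    (1 / (t:ℝ)) * (∑ v : Fin t → A × O, Gp t v * Real.log (Pp t v)) =
        GUA + GUE + PUA ∧
    PUA ≤ 0 ∧
    (1 / (t:ℝ)) * (∑ v : Fin t → A × O, Gp t v * Real.log (Pp t v)) ≤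
      (1 / (t:ℝ)) * (∑ v : Fin t → A × O, Gp t v * Real.log (Gp t v)) := by
  obtain rfl : Gp = chainProb (jointStep pA pE) := funext₂ hGp
  obtain rfl : Pp = chainProb (jointStep pA pO) := funext₂ hPp
  have hnorm := sum_jointStep hpAnorm hpEnorm
  change GUA = -(1 / (t : ℝ)) * ∑ τ : Fin t,
    -stepExpectation (jointStep pA pE) τ (fun l x => Real.log (pA l x.1)) at hGUA
  change GUE = -(1 / (t : ℝ)) * ∑ τ : Fin t,
    -stepExpectation (jointStep pA pE) τ (fun l x => Real.log (pE l x.1 x.2)) at hGUE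
  change PUA = -(1 / (t : ℝ)) * ∑ τ : Fin t, stepExpectation (jointStep pA pE) τ
    (fun l x => Real.log (pE l x.1 x.2 / pO l x.1 x.2)) at hPUA
  have hagent : (1 / (t:ℝ)) * ∑ v, chainProb (jointStep pA pE) t v *
      Real.log (chainProb (jointStep pA pO) t v) = GUA + GUE + PUA := by
    rw [sum_chainProb_mul_log_chainProb_jointStep hnorm hpA hpO, hGUA, hGUE, hPUA]
    simp only [stepExpectation_log_eq_sub hpE hpO, sum_add_distrib, sum_sub_distrib,
      sum_neg_distrib]
    ring
  have hgen : (1 / (t:ℝ)) * ∑ v, chainProb (jointStep pA pE) t v *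
      Real.log (chainProb (jointStep pA pE) t v) = GUA + GUE := by
    rw [sum_chainProb_mul_log_chainProb_jointStep hnorm hpA hpE, hGUA, hGUE]
    simp only [sum_add_distrib, sum_neg_distrib]
    ring
  have hPUA_nonpos : PUA ≤ 0 := by
    rw [hPUA, neg_mul]
    exact neg_nonpos.2 (mul_nonneg (by positivity) (sum_nonneg fun τ _ =>
      stepExpectation_log_div_nonneg (fun l a => (hpA l a).le) hpE hpO hpEnorm hpOnorm τ))
  exact ⟨hagent, hPUA_nonpos, by linarith⟩

/-- Corollary 1 (agent part): the agent's expected utility equals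
`GU_𝔓 + GU_𝔔 + PU_𝔓`, where `PU_𝔓 ≤ 0` is minus the per-step KL divergence rate from
the environment's to the agent's observation predictions; hence the agent's expected
utility never exceeds that of the generative distribution. -/
theorem expected_utility_agent {A O : Type*} [Fintype A] [Fintype O]
    (pA : List (A × O) → A → ℝ)        -- 𝔓(a_τ | ao_{<τ})
    (pE : List (A × O) → A → O → ℝ)    -- 𝔔(o_τ | ao_{<τ} a_τ)
    (pO : List (A × O) → A → O → ℝ)    -- 𝔓(o_τ | ao_{<τ} a_τ)
    (hpA : ∀ l a, 0 < pA l a) (hpE : ∀ l a o, 0 < pE l a o) (hpO : ∀ l a o, 0 < pO l a o)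
    (hpAnorm : ∀ l, ∑ a : A, pA l a = 1)
    (hpEnorm : ∀ l a, ∑ o : O, pE l a o = 1)
    (hpOnorm : ∀ l a, ∑ o : O, pO l a o = 1)
    (Gp : ∀ n : ℕ, (Fin n → A × O) → ℝ)  -- generative prefix probabilities
    (hGp : ∀ n (v : Fin n → A × O), Gp n v =
      ∏ i : Fin n,
        (pA (List.ofFn fun j : Fin i => v (Fin.castLE i.isLt.le j)) (v i).1 *
          pE (List.ofFn fun j : Fin i => v (Fin.castLE i.isLt.le j)) (v i).1 (v i).2))
    (Pp : ∀ n : ℕ, (Fin n → A × O) → ℝ)  -- agent prefix probabilities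
    (hPp : ∀ n (v : Fin n → A × O), Pp n v =
      ∏ i : Fin n,
        (pA (List.ofFn fun j : Fin i => v (Fin.castLE i.isLt.le j)) (v i).1 *
          pO (List.ofFn fun j : Fin i => v (Fin.castLE i.isLt.le j)) (v i).1 (v i).2))
    (t : ℕ) (ht : 0 < t)
    (GUA GUE PUA : ℝ)
    (hGUA : GUA = -(1 / (t:ℝ)) * ∑ τ : Fin t, -∑ v : Fin (τ + 1) → A × O,
      Gp (τ + 1) v *
        Real.log (pA (List.ofFn fun j : Fin τ => v j.castSucc) (v (Fin.last τ)).1))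
    (hGUE : GUE = -(1 / (t:ℝ)) * ∑ τ : Fin t, -∑ v : Fin (τ + 1) → A × O,
      Gp (τ + 1) v *
        Real.log (pE (List.ofFn fun j : Fin τ => v j.castSucc) (v (Fin.last τ)).1
          (v (Fin.last τ)).2))
    (hPUA : PUA = -(1 / (t:ℝ)) * ∑ τ : Fin t, ∑ v : Fin (τ + 1) → A × O,
      Gp (τ + 1) v *
        Real.log (pE (List.ofFn fun j : Fin τ => v j.castSucc) (v (Fin.last τ)).1
            (v (Fin.last τ)).2 /
          pO (List.ofFn fun j : Fin τ => v j.castSucc) (v (Fin.last τ)).1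
            (v (Fin.last τ)).2)) :
    (1 / (t:ℝ)) * (∑ v : Fin t → A × O, Gp t v * Real.log (Pp t v)) =
        GUA + GUE + PUA ∧
    PUA ≤ 0 ∧
    (1 / (t:ℝ)) * (∑ v : Fin t → A × O, Gp t v * Real.log (Pp t v)) ≤
      (1 / (t:ℝ)) * (∑ v : Fin t → A × O, Gp t v * Real.log (Gp t v)) :=
  expected_utility_agent_general pA pE pO hpA hpE hpO hpAnorm hpEnorm hpOnorm Gp hGp Pp hPp t GUA
    GUE PUA hGUA hGUE hPUA
end
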